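/- For any graph G and any Roman graph H (i.e., γ_R(H) = 2γ(H)), γ_R(G □ H) ≥ (4/3)·γ(G)·γ(H) and γ(G □ H) ≥ (2/3)·γ(G)·γ(H). -/

import Mathlib

open Finset

/-- A set `S` is a dominating set of `G` if every vertex outside `S` has a neighbor in `S`. -/
def IsDominatingSet {V : Type*} (G : SimpleGraph V) (S : Set V) : Prop :=
  ∀ v, v ∉ S → ∃ u ∈ S, G.Adj u v

/-- The domination number `γ(G)`. -/
noncomputable def domNum {V : Type*} [Fintype V] (G : SimpleGraph V) : ℕ :=
  sInf {n | ∃ S : Finset V, IsDominatingSet G ↑S ∧ S.card = n}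

/-- A Roman dominating function: values in {0,1,2}, every vertex of value 0 has a
neighbor of value 2. -/
def IsRDF {V : Type*} (G : SimpleGraph V) (f : V → ℕ) : Prop :=
  (∀ v, f v ≤ 2) ∧ ∀ v, f v = 0 → ∃ u, G.Adj u v ∧ f u = 2

/-- The Roman domination number `γ_R(G)`. -/
noncomputable def romanDomNum {V : Type*} [Fintype V] (G : SimpleGraph V) : ℕ :=
  sInf {n | ∃ f : V → ℕ, IsRDF G f ∧ ∑ v, f v = n}

/-- The strong product of graphs. -/
def strongProd {V W : Type*} (G : SimpleGraph V) (H : SimpleGraph W) :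
    SimpleGraph (V × W) where
  Adj x y := x ≠ y ∧ (x.1 = y.1 ∨ G.Adj x.1 y.1) ∧ (x.2 = y.2 ∨ H.Adj x.2 y.2)
  symm := ⟨fun x y => by
    rintro ⟨h, h1, h2⟩
    refine ⟨h.symm, ?_, ?_⟩
    · cases h1 with
      | inl h => exact Or.inl h.symm
      | inr h => exact Or.inr h.symm
    · cases h2 with
      | inl h => exact Or.inl h.symm
      | inr h => exact Or.inr h.symm⟩
  loopless := ⟨fun x => by simp⟩

/-- `G` has an efficient dominating set: a dominating set whose elements have
pairwise disjoint closed neighborhoods. -/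
def HasEfficientDomSet {V : Type*} (G : SimpleGraph V) : Prop :=
  ∃ S : Finset V, IsDominatingSet G ↑S ∧
    ∀ u ∈ S, ∀ v ∈ S, u ≠ v →
      Disjoint (insert u (G.neighborSet u)) (insert v (G.neighborSet v))

/-! Fix a minimum dominating set `S` of `G`, send every vertex of `G` to a dominator `p v ∈ S`,
and let `f` be a minimum Roman dominating function of `G □ H`. For `s ∈ S`, the cells
`p⁻¹(s) × {h}` form a copy of `H` (a tube), and taking the maximum of `f` on each cell, raised to
`1` on cells that are not dominated inside the tube, gives a Roman dominating function of `H`.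
Hence `2 γ(G) γ(H) = γ(G) γ_R(H) ≤ w + u`, where `w = γ_R(G □ H)` and `u` counts the raised cells.
The raised cells of a row `G × {h}` must be dominated along the row, so replacing them in `S` by
the vertices of value `2` of that row leaves a dominating set of `G`: `u` is at most the number of
vertices of value `2`, which is at most `w / 2`. Thus `4 γ(G) γ(H) ≤ 3 γ_R(G □ H)`, and the bound
for `γ(G □ H)` follows from `γ_R ≤ 2 γ`. -/

section Basic

variable {V : Type*} [Fintype V] (G : SimpleGraph V)

lemma domNum_le_card {S : Finset V} (hS : IsDominatingSet G ↑S) : domNum G ≤ #S :=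
  Nat.sInf_le ⟨S, hS, rfl⟩

lemma romanDomNum_le_sum {f : V → ℕ} (hf : IsRDF G f) : romanDomNum G ≤ ∑ v, f v :=
  Nat.sInf_le ⟨f, hf, rfl⟩

lemma exists_isDominatingSet_card_eq_domNum :
    ∃ S : Finset V, IsDominatingSet G ↑S ∧ #S = domNum G :=
  Nat.sInf_mem (s := {n | ∃ S : Finset V, IsDominatingSet G ↑S ∧ #S = n})
    ⟨#(univ : Finset V), univ, fun v hv => absurd (mem_univ v) hv, rfl⟩

lemma exists_isRDF_sum_eq_romanDomNum : ∃ f : V → ℕ, IsRDF G f ∧ ∑ v, f v = romanDomNum G :=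
  Nat.sInf_mem (s := {n | ∃ f : V → ℕ, IsRDF G f ∧ ∑ v, f v = n})
    ⟨∑ _v : V, 2, fun _ => 2, ⟨fun _ => le_rfl, fun _ h => absurd h two_ne_zero⟩, rfl⟩

lemma romanDomNum_le_two_mul_domNum : romanDomNum G ≤ 2 * domNum G := by
  classical
  obtain ⟨S, hS, hcard⟩ := exists_isDominatingSet_card_eq_domNum G
  have hRDF : IsRDF G fun v => if v ∈ S then 2 else 0 := by
    refine ⟨fun v => by dsimp only; split <;> omega, fun v hv => ?_⟩
    obtain ⟨u, hu, hadj⟩ := hS v fun hvS => by simp [Finset.mem_coe.mp hvS] at hv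
    exact ⟨u, hadj, if_pos hu⟩
  calc romanDomNum G ≤ ∑ v, if v ∈ S then 2 else 0 := romanDomNum_le_sum G hRDF
    _ = 2 * domNum G := by rw [sum_ite_mem, univ_inter, sum_const, smul_eq_mul, hcard, mul_comm]

end Basic

lemma IsDominatingSet.exists_dominator {V : Type*} {G : SimpleGraph V} {S : Set V}
    (hS : IsDominatingSet G S) (v : V) : ∃ s ∈ S, s = v ∨ G.Adj s v := by
  by_cases hv : v ∈ S
  · exact ⟨v, hv, Or.inl rfl⟩
  · obtain ⟨s, hs, hadj⟩ := hS v hv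
    exact ⟨s, hs, Or.inr hadj⟩

lemma two_mul_card_filter_eq_two_le_sum {α : Type*} (s : Finset α) (f : α → ℕ) :
    2 * #(s.filter (f · = 2)) ≤ ∑ a ∈ s, f a := by
  rw [card_filter, mul_sum]
  exact sum_le_sum fun a _ => by split <;> omega

section Tube

open scoped Classical

variable {V W : Type*} [Fintype V] (H : SimpleGraph W) (f : V × W → ℕ) (p : V → V)

noncomputable def cellMax (s : V) (h : W) : ℕ :=
  (univ.filter (p · = s)).sup fun g => f (g, h)

def IsVertUndominated (s : V) (h : W) : Prop :=
  cellMax f p s h = 0 ∧ ∀ h', H.Adj h' h → cellMax f p s h' ≠ 2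

noncomputable def tubeFun (s : V) (h : W) : ℕ :=
  if IsVertUndominated H f p s h then 1 else cellMax f p s h

variable {H f p}

lemma le_cellMax {g s : V} (h : W) (hg : p g = s) : f (g, h) ≤ cellMax f p s h :=
  le_sup (f := fun g => f (g, h)) (mem_filter.2 ⟨mem_univ g, hg⟩)

lemma cellMax_le_two (hf : ∀ x, f x ≤ 2) (s : V) (h : W) : cellMax f p s h ≤ 2 :=
  Finset.sup_le fun g _ => hf (g, h)

lemma cellMax_le_sum (s : V) (h : W) :
    cellMax f p s h ≤ ∑ g ∈ univ.filter (p · = s), f (g, h) :=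
  Finset.sup_le fun _ hg => single_le_sum (f := fun g => f (g, h)) (fun _ _ => Nat.zero_le _) hg

lemma isRDF_tubeFun (hf : ∀ x, f x ≤ 2) (s : V) : IsRDF H (tubeFun H f p s) := by
  refine ⟨fun h => ?_, fun h h0 => ?_⟩
  · unfold tubeFun
    split
    · omega
    · exact cellMax_le_two hf s h
  · unfold tubeFun at h0
    split at h0
    · omega
    · rename_i hundom
      obtain ⟨h', hadj, h'max⟩ : ∃ h', H.Adj h' h ∧ cellMax f p s h' = 2 := by
        by_contra! hall
        exact hundom ⟨h0, hall⟩
      refine ⟨h', hadj, ?_⟩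
      rw [tubeFun, if_neg fun hund => by simp [hund.1] at h'max, h'max]

lemma tubeFun_le_sum_add (s : V) (h : W) :
    tubeFun H f p s h ≤
      ∑ g ∈ univ.filter (p · = s), f (g, h) + if IsVertUndominated H f p s h then 1 else 0 := by
  unfold tubeFun
  split
  · omega
  · simpa using cellMax_le_sum s h

variable {G : SimpleGraph V} {S : Finset V}

lemma isDominatingSet_rowTwos_union (hf : IsRDF (G.boxProd H) f)
    (hp : ∀ v, p v ∈ S ∧ (p v = v ∨ G.Adj (p v) v)) (h : W) :
    IsDominatingSet G ↑(univ.filter (fun g => f (g, h) = 2) ∪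
      S.filter fun s => ¬ IsVertUndominated H f p s h) := by
  intro v hv
  simp only [coe_union, coe_filter, Set.mem_union, Set.mem_ofPred_eq, mem_univ, true_and,
    not_or, not_and, not_not] at hv
  by_cases hund : IsVertUndominated H f p (p v) h
  · have hv0 : f (v, h) = 0 := Nat.le_zero.1 (hund.1 ▸ le_cellMax h rfl)
    obtain ⟨⟨g, h'⟩, hadj, hval⟩ := hf.2 (v, h) hv0
    rcases SimpleGraph.boxProd_adj.1 hadj with ⟨hG, rfl⟩ | ⟨hH, rfl⟩
    · exact ⟨g, by simp [hval], hG⟩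
    · have : cellMax f p (p g) h' = 2 :=
        le_antisymm (cellMax_le_two hf.1 _ _) (hval ▸ le_cellMax h' rfl)
      exact absurd this (hund.2 h' hH)
  · have hpv : p v ≠ v := fun he => hund (by rw [he]; exact hv.2 (he ▸ (hp v).1))
    exact ⟨p v, by simp [(hp v).1, hund], (hp v).2.resolve_left hpv⟩

lemma card_filter_isVertUndominated_le (hf : IsRDF (G.boxProd H) f)
    (hp : ∀ v, p v ∈ S ∧ (p v = v ∨ G.Adj (p v) v)) (hS : #S = domNum G) (h : W) :
    #(S.filter fun s => IsVertUndominated H f p s h) ≤ #(univ.filter fun g => f (g, h) = 2) := by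
  have hdom := domNum_le_card G (isDominatingSet_rowTwos_union hf hp h)
  have hunion := card_union_le (univ.filter fun g => f (g, h) = 2)
    (S.filter fun s => ¬ IsVertUndominated H f p s h)
  have hsplit :=
    card_filter_add_card_filter_not (s := S) (p := fun s => IsVertUndominated H f p s h)
  omega

end Tube

lemma four_mul_domNum_mul_domNum_le_three_mul_romanDomNum_boxProd {V W : Type*}
    [Fintype V] [Fintype W] (G : SimpleGraph V) (H : SimpleGraph W)
    (hRoman : romanDomNum H = 2 * domNum H) :
    4 * (domNum G * domNum H) ≤ 3 * romanDomNum (G.boxProd H) := by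
  classical
  obtain ⟨f, hf, hw⟩ := exists_isRDF_sum_eq_romanDomNum (G.boxProd H)
  obtain ⟨S, hS, hScard⟩ := exists_isDominatingSet_card_eq_domNum G
  choose p hp using hS.exists_dominator
  set u := ∑ h, #(S.filter fun s => IsVertUndominated H f p s h)
  set b := ∑ h, #(univ.filter fun g => f (g, h) = 2)
  have hcells : ∑ s ∈ S, ∑ h, ∑ g ∈ univ.filter (p · = s), f (g, h) = ∑ x, f x := by
    simp_rw [sum_comm (s := univ (α := W))]
    rw [sum_fiberwise_of_maps_to fun g _ => (hp g).1, Fintype.sum_prod_type]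
  have htubes : 2 * domNum H * domNum G ≤ ∑ x, f x + u :=
    calc 2 * domNum H * domNum G = ∑ s ∈ S, romanDomNum H := by
          rw [sum_const, smul_eq_mul, hScard, hRoman, mul_comm]
      _ ≤ ∑ s ∈ S, ∑ h, tubeFun H f p s h :=
          sum_le_sum fun s _ => romanDomNum_le_sum H (isRDF_tubeFun hf.1 s)
      _ ≤ ∑ s ∈ S, ∑ h, (∑ g ∈ univ.filter (p · = s), f (g, h) +
            if IsVertUndominated H f p s h then 1 else 0) :=
          sum_le_sum fun s _ => sum_le_sum fun h _ => tubeFun_le_sum_add s h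
      _ = ∑ x, f x + u := by
          simp only [sum_add_distrib, hcells, u, card_filter]
          congr 1
          exact sum_comm
  have hub : u ≤ b := sum_le_sum fun h _ => card_filter_isVertUndominated_le hf hp hScard h
  have hbw : 2 * b ≤ ∑ x, f x := by
    rw [mul_sum, Fintype.sum_prod_type_right]
    exact sum_le_sum fun h _ => by
      simpa using two_mul_card_filter_eq_two_le_sum univ fun g => f (g, h)
  rw [← hw]
  linarith

theorem stmt8 {V W : Type*} [Fintype V] [Fintype W]
    (G : SimpleGraph V) (H : SimpleGraph W)
    (hRoman : romanDomNum H = 2 * domNum H) :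
    (romanDomNum (G.boxProd H) : ℝ) ≥ 4 / 3 * domNum G * domNum H ∧
    (domNum (G.boxProd H) : ℝ) ≥ 2 / 3 * domNum G * domNum H := by
  have hkey : (4 : ℝ) * (domNum G * domNum H) ≤ 3 * romanDomNum (G.boxProd H) := by
    exact_mod_cast four_mul_domNum_mul_domNum_le_three_mul_romanDomNum_boxProd G H hRoman
  have hle : (romanDomNum (G.boxProd H) : ℝ) ≤ 2 * domNum (G.boxProd H) := by
    exact_mod_cast romanDomNum_le_two_mul_domNum (G.boxProd H)
  constructor <;> linarith
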